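/- arXiv:2203.05903 — 2 statements merged into one kernel-verified Lean document; each statement's English description precedes it below -/
import Mathlib

section
/- Let a, b ∈ ℝ with a ≤ b, let h(z) = erf((z − a)/√2) − erf((z − b)/√2), let m = (a + b)/2, and let ž ≤ ẑ be reals. Let z* be the projection (clamp) of m onto [ž, ẑ], i.e., z* = m if m ∈ [ž, ẑ], z* = ž if m < ž, and z* = ẑ if m > ẑ. Then h(z) ≤ h(z*) for every z ∈ [ž, ẑ]. -/
/-- The Gauss error function `erf x = (2/√π) ∫₀ˣ exp (−t²) dt`. -/
noncomputable def erf (x : ℝ) : ℝ :=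
  (2 / Real.sqrt Real.pi) * ∫ t in (0:ℝ)..x, Real.exp (-t ^ 2)

/-!
`h` is differentiable with `h' z = √(2/π) (exp (-(z-a)²/2) - exp (-(z-b)²/2))`, which is
nonnegative exactly when `z` is at least as close to `a` as to `b`, i.e. for `z ≤ m` when
`a ≤ b`. So `h` increases up to `m` and decreases after it, and a function that is unimodal
in this sense attains its maximum over `[ž, ẑ]` at the clamp of its mode.
-/

open Real Set

theorem le_of_monotoneOn_Iic_of_antitoneOn_Ici {α β : Type*} [LinearOrder α] [Preorder β]
    {f : α → β} {m lo hi z : α} (hmono : MonotoneOn f (Iic m)) (hanti : AntitoneOn f (Ici m))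
    (hz : z ∈ Icc lo hi) :
    f z ≤ f (if m < lo then lo else if hi < m then hi else m) := by
  obtain ⟨hlo, hhi⟩ := hz
  split_ifs with h_lo h_hi
  · exact hanti h_lo.le (h_lo.trans_le hlo).le hlo
  · exact hmono (hhi.trans h_hi.le) h_hi.le hhi
  · rcases le_total z m with hzm | hmz
    · exact hmono hzm self_mem_Iic hzm
    · exact hanti self_mem_Ici hmz hmz

theorem hasDerivAt_erf (x : ℝ) : HasDerivAt erf (2 / √π * exp (-x ^ 2)) x :=
  ((continuous_exp.comp (continuous_pow 2).neg).integral_hasStrictDerivAt 0 x).hasDerivAt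
    |>.const_mul _

/-- The difference `h` of the statement; `h z` is the mass that `N(z, 1)` gives to `[a, b]`,
up to the factor `2`. -/
noncomputable def erfDiff (a b z : ℝ) : ℝ :=
  erf ((z - a) / √2) - erf ((z - b) / √2)

theorem hasDerivAt_erfDiff (a b x : ℝ) :
    HasDerivAt (erfDiff a b)
      (2 / √π / √2 * (exp (-(x - a) ^ 2 / 2) - exp (-(x - b) ^ 2 / 2))) x := by
  have hscale (c : ℝ) : HasDerivAt (fun z : ℝ => (z - c) / √2) (1 / √2) x :=
    ((hasDerivAt_id x).sub_const c).div_const _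
  have hsq (c : ℝ) : -((x - c) / √2) ^ 2 = -(x - c) ^ 2 / 2 := by
    rw [div_pow, sq_sqrt zero_le_two, neg_div]
  refine (((hasDerivAt_erf _).comp x (hscale a)).sub
    ((hasDerivAt_erf _).comp x (hscale b))).congr_deriv ?_
  rw [hsq, hsq]
  ring

theorem exp_neg_sq_half_le {u v : ℝ} (h : u ^ 2 ≤ v ^ 2) :
    exp (-v ^ 2 / 2) ≤ exp (-u ^ 2 / 2) :=
  exp_le_exp.2 (div_le_div_of_nonneg_right (neg_le_neg h) zero_le_two)

theorem monotoneOn_erfDiff {a b : ℝ} (hab : a ≤ b) :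
    MonotoneOn (erfDiff a b) (Iic ((a + b) / 2)) := by
  refine monotoneOn_of_hasDerivWithinAt_nonneg (convex_Iic _)
    (fun x _ => (hasDerivAt_erfDiff a b x).continuousAt.continuousWithinAt)
    (fun x _ => (hasDerivAt_erfDiff a b x).hasDerivWithinAt) fun x hx => ?_
  rw [interior_Iic, mem_Iio] at hx
  have hcloser : (x - a) ^ 2 ≤ (x - b) ^ 2 := by nlinarith
  exact mul_nonneg (by positivity) (sub_nonneg.2 (exp_neg_sq_half_le hcloser))

theorem antitoneOn_erfDiff {a b : ℝ} (hab : a ≤ b) :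
    AntitoneOn (erfDiff a b) (Ici ((a + b) / 2)) := by
  refine antitoneOn_of_hasDerivWithinAt_nonpos (convex_Ici _)
    (fun x _ => (hasDerivAt_erfDiff a b x).continuousAt.continuousWithinAt)
    (fun x _ => (hasDerivAt_erfDiff a b x).hasDerivWithinAt) fun x hx => ?_
  rw [interior_Ici, mem_Ioi] at hx
  have hcloser : (x - b) ^ 2 ≤ (x - a) ^ 2 := by nlinarith
  exact mul_nonpos_of_nonneg_of_nonpos (by positivity) (sub_nonpos.2 (exp_neg_sq_half_le hcloser))

theorem erf_diff_max_at_clamp_general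
    (a b : ℝ) (hab : a ≤ b) (zlo zhi : ℝ)
    (zstar : ℝ)
    (hstar : zstar =
      if (a + b) / 2 < zlo then zlo
      else if zhi < (a + b) / 2 then zhi
      else (a + b) / 2) :
    ∀ z ∈ Set.Icc zlo zhi,
      erf ((z - a) / Real.sqrt 2) - erf ((z - b) / Real.sqrt 2) ≤
        erf ((zstar - a) / Real.sqrt 2) - erf ((zstar - b) / Real.sqrt 2) := by
  intro z hz
  subst hstar
  exact le_of_monotoneOn_Iic_of_antitoneOn_Ici (monotoneOn_erfDiff hab)
    (antitoneOn_erfDiff hab) hz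

/-- the maximum of `h z = erf((z−a)/√2) − erf((z−b)/√2)` over an
interval `[ž, ẑ]` of candidate means is attained at the clamp of the midpoint
`m = (a+b)/2` onto `[ž, ẑ]`. -/
theorem erf_diff_max_at_clamp
    (a b : ℝ) (hab : a ≤ b) (zlo zhi : ℝ) (hz : zlo ≤ zhi)
    (zstar : ℝ)
    (hstar : zstar =
      if (a + b) / 2 < zlo then zlo
      else if zhi < (a + b) / 2 then zhi
      else (a + b) / 2) :
    ∀ z ∈ Set.Icc zlo zhi,
      erf ((z - a) / Real.sqrt 2) - erf ((z - b) / Real.sqrt 2) ≤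
        erf ((zstar - a) / Real.sqrt 2) - erf ((zstar - b) / Real.sqrt 2) :=
  erf_diff_max_at_clamp_general a b hab zlo zhi zstar hstar
end

section
/- Fix x̌, x̂ ∈ ℝⁿ with x̌⁽ˡ⁾ ≤ x̂⁽ˡ⁾ for every l, let g be the associated erf-product function, and let v̄ = (x̌ + x̂)/2 be the center of the box [x̌, x̂]. Let ž, ẑ ∈ ℝⁿ with ž⁽ˡ⁾ ≤ ẑ⁽ˡ⁾ for all l, and define z_min ∈ ℝⁿ coordinatewise by letting z_min⁽ˡ⁾ be the endpoint of [ž⁽ˡ⁾, ẑ⁽ˡ⁾] farther from v̄⁽ˡ⁾ (i.e., z_min⁽ˡ⁾ = argmax over z ∈ {ž⁽ˡ⁾, ẑ⁽ˡ⁾} of |z − v̄⁽ˡ⁾|). Then g(z_min) ≤ g(z) for every z in the box [ž, ẑ]. -/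
/-- The erf-product function
`g z = 2⁻ⁿ ∏ₗ (erf((zₗ − x̌ₗ)/√2) − erf((zₗ − x̂ₗ)/√2))`. -/
noncomputable def gerf {n : ℕ} (xlo xhi : Fin n → ℝ) (z : Fin n → ℝ) : ℝ :=
  (1 / 2 : ℝ) ^ n *
    ∏ l, (erf ((z l - xlo l) / Real.sqrt 2) - erf ((z l - xhi l) / Real.sqrt 2))

/-!
Each factor of `g` is `2/√π` times the Gaussian mass `∫ exp (-t²)` of a window of fixed
half-width `(x̂ - x̌)/(2√2)` centred at `(z - v̄)/√2`. Since the Gaussian is even and decreasing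
on `[0, ∞)`, sliding such a window away from the origin only loses mass (its derivative in the
centre `m` is `f (m + r) - f (m - r) ≤ 0`), so every factor is nonnegative and decreases in
`|z - v̄|`. On an interval `|z - v̄|` is maximal at an endpoint, and a product of nonnegative
factors is monotone in each of them.
-/

open intervalIntegral MeasureTheory Real Set

section WindowIntegral

variable {f : ℝ → ℝ}

theorem hasDerivAt_integral_sub_add (hf : Continuous f) (r m : ℝ) :
    HasDerivAt (fun m => ∫ t in (m - r)..(m + r), f t) (f (m + r) - f (m - r)) m := by
  have hF (x : ℝ) : HasDerivAt (fun u => ∫ t in (0 : ℝ)..u, f t) (f x) x :=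
    (hf.integral_hasStrictDerivAt 0 x).hasDerivAt
  have hsub := ((hF (m + r)).comp m ((hasDerivAt_id m).add_const r)).sub
    ((hF (m - r)).comp m ((hasDerivAt_id m).sub_const r))
  simp only [Function.comp_def, id, mul_one] at hsub
  refine hsub.congr_of_eventuallyEq (Filter.Eventually.of_forall fun m => ?_)
  exact (integral_interval_sub_left (hf.intervalIntegrable _ _) (hf.intervalIntegrable _ _)).symm

theorem integral_neg_sub_neg_add (heven : ∀ t, f (-t) = f t) (r m : ℝ) :
    ∫ t in (-m - r)..(-m + r), f t = ∫ t in (m - r)..(m + r), f t := by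
  conv_rhs => enter [1, t]; rw [← heven t]
  rw [integral_comp_neg]
  congr 1 <;> ring

theorem antitoneOn_integral_sub_add (hf : Continuous f) (hanti : AntitoneOn f (Ici 0))
    (heven : ∀ t, f (-t) = f t) {r : ℝ} (hr : 0 ≤ r) :
    AntitoneOn (fun m => ∫ t in (m - r)..(m + r), f t) (Ici 0) := by
  have hderiv := hasDerivAt_integral_sub_add hf r
  refine antitoneOn_of_deriv_nonpos (convex_Ici 0)
    (fun m _ => (hderiv m).continuousAt.continuousWithinAt)
    (fun m _ => (hderiv m).differentiableAt.differentiableWithinAt) fun m hm => ?_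
  rw [interior_Ici, mem_Ioi] at hm
  rw [(hderiv m).deriv, sub_nonpos]
  -- `|m - r| ≤ m + r`, and `f` only depends on `|t|`
  have hf_abs (t : ℝ) : f |t| = f t := by
    rcases abs_choice t with h | h <;> rw [h]; exact heven t
  rw [← hf_abs (m - r)]
  exact hanti (mem_Ici.2 (abs_nonneg _)) (mem_Ici.2 (by linarith))
    (abs_sub_le_iff.2 ⟨by linarith, by linarith⟩)

theorem integral_sub_add_le_of_abs_le (hf : Continuous f) (hanti : AntitoneOn f (Ici 0))
    (heven : ∀ t, f (-t) = f t) {r : ℝ} (hr : 0 ≤ r) {m₁ m₂ : ℝ} (h : |m₁| ≤ |m₂|) :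
    ∫ t in (m₂ - r)..(m₂ + r), f t ≤ ∫ t in (m₁ - r)..(m₁ + r), f t := by
  have h_abs (m : ℝ) :
      ∫ t in (|m| - r)..(|m| + r), f t = ∫ t in (m - r)..(m + r), f t := by
    rcases abs_choice m with hm | hm <;> rw [hm]
    exact integral_neg_sub_neg_add heven r m
  rw [← h_abs m₁, ← h_abs m₂]
  exact antitoneOn_integral_sub_add hf hanti heven hr (mem_Ici.2 (abs_nonneg _))
    (mem_Ici.2 ((abs_nonneg _).trans h)) h

end WindowIntegral

theorem continuous_exp_neg_sq : Continuous fun t : ℝ => exp (-t ^ 2) := by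
  fun_prop

theorem antitoneOn_exp_neg_sq : AntitoneOn (fun t : ℝ => exp (-t ^ 2)) (Ici 0) :=
  fun _ hs _ _ hst => exp_le_exp.2 (neg_le_neg (pow_le_pow_left₀ hs hst 2))

theorem erf_sub_erf (x y : ℝ) : erf x - erf y = 2 / √π * ∫ t in y..x, exp (-t ^ 2) := by
  rw [erf, erf, ← mul_sub, integral_interval_sub_left
    (continuous_exp_neg_sq.intervalIntegrable _ _) (continuous_exp_neg_sq.intervalIntegrable _ _)]

theorem erf_monotone : Monotone erf := fun y x hyx => by
  rw [← sub_nonneg, erf_sub_erf]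
  exact mul_nonneg (by positivity) (integral_nonneg hyx fun t _ => (exp_pos _).le)

theorem erf_sub_erf_nonneg {a b : ℝ} (hab : a ≤ b) (z : ℝ) :
    0 ≤ erf ((z - a) / √2) - erf ((z - b) / √2) :=
  sub_nonneg.2 (erf_monotone (by gcongr))

theorem erf_sub_erf_eq_integral_sub_add (a b z : ℝ) :
    erf ((z - a) / √2) - erf ((z - b) / √2) = 2 / √π *
      ∫ t in ((z - (a + b) / 2) / √2 - (b - a) / (2 * √2))..((z - (a + b) / 2) / √2 +
        (b - a) / (2 * √2)), exp (-t ^ 2) := by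
  have hs : √2 ≠ 0 := by positivity
  rw [erf_sub_erf]
  congr 3 <;> field_simp <;> ring

theorem erf_sub_erf_le_of_abs_le {a b : ℝ} (hab : a ≤ b) {z₁ z₂ : ℝ}
    (h : |z₂ - (a + b) / 2| ≤ |z₁ - (a + b) / 2|) :
    erf ((z₁ - a) / √2) - erf ((z₁ - b) / √2) ≤ erf ((z₂ - a) / √2) - erf ((z₂ - b) / √2) := by
  rw [erf_sub_erf_eq_integral_sub_add, erf_sub_erf_eq_integral_sub_add]
  refine mul_le_mul_of_nonneg_left ?_ (by positivity)
  refine integral_sub_add_le_of_abs_le continuous_exp_neg_sq antitoneOn_exp_neg_sq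
    (fun t => by rw [neg_sq]) (div_nonneg (by linarith) (by positivity)) ?_
  rw [abs_div, abs_div]
  gcongr

theorem abs_sub_le_abs_ite_sub {lo hi z c : ℝ} (hz : z ∈ Icc lo hi) :
    |z - c| ≤ |(if |hi - c| ≤ |lo - c| then lo else hi) - c| := by
  refine (abs_le_max_abs_abs (sub_le_sub_right hz.1 c) (sub_le_sub_right hz.2 c)).trans ?_
  split_ifs with h
  · exact (max_eq_left h).le
  · exact (max_eq_right (not_le.1 h).le).le

theorem gerf_min_at_farthest_vertex_general
    {n : ℕ} (xlo xhi : Fin n → ℝ) (hx : ∀ l, xlo l ≤ xhi l)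
    (zlo zhi : Fin n → ℝ)
    (vbar : Fin n → ℝ) (hvbar : vbar = fun l => (xlo l + xhi l) / 2)
    (zmin : Fin n → ℝ)
    (hzmin : ∀ l, zmin l =
      if |zhi l - vbar l| ≤ |zlo l - vbar l| then zlo l else zhi l) :
    ∀ z ∈ Set.Icc zlo zhi, gerf xlo xhi zmin ≤ gerf xlo xhi z := by
  intro z hz
  subst hvbar
  have h_farther (l : Fin n) :
      |z l - (xlo l + xhi l) / 2| ≤ |zmin l - (xlo l + xhi l) / 2| := by
    rw [hzmin l]
    exact abs_sub_le_abs_ite_sub ⟨hz.1 l, hz.2 l⟩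
  refine mul_le_mul_of_nonneg_left ?_ (by positivity)
  exact Finset.prod_le_prod (fun l _ => erf_sub_erf_nonneg (hx l) _)
    fun l _ => erf_sub_erf_le_of_abs_le (hx l) (h_farther l)

/-- lower-bound half of Theorem 1: the minimum of `g` over the box of
candidate means `[ž, ẑ]` is attained at the coordinatewise endpoint `z_min` of
`[ž, ẑ]` farther from the center `v̄ = (x̌ + x̂)/2` of the target box. -/
theorem gerf_min_at_farthest_vertex
    {n : ℕ} (xlo xhi : Fin n → ℝ) (hx : ∀ l, xlo l ≤ xhi l)
    (zlo zhi : Fin n → ℝ) (hz : ∀ l, zlo l ≤ zhi l)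
    (vbar : Fin n → ℝ) (hvbar : vbar = fun l => (xlo l + xhi l) / 2)
    (zmin : Fin n → ℝ)
    (hzmin : ∀ l, zmin l =
      if |zhi l - vbar l| ≤ |zlo l - vbar l| then zlo l else zhi l) :
    ∀ z ∈ Set.Icc zlo zhi, gerf xlo xhi zmin ≤ gerf xlo xhi z :=
  gerf_min_at_farthest_vertex_general xlo xhi hx zlo zhi vbar hvbar zmin hzmin
end
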